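/- Let G be a finite graph on vertices {1, …, n} and let H₁, …, H_n be edgeless finite graphs. Then the inflation G[H₁, …, H_n] satisfies lcw(G[H₁, …, H_n]) = lcw(G), provided each H_i is nonempty. -/

import Mathlib

/-! ## Common definitions

Linear clique-width (lcw) expressions and derived notions, following
Brignall–Lozin–Stacho, "Bichain graphs: geometric model and universal graphs" /
"Linear clique-width of subclasses of cographs".

An lcw expression over a label alphabet `L` is a list of operations:
insert a new vertex with a given label, add all edges between two distinct
label classes, or relabel one label class to another.  Vertices are indexed
by the natural numbers `0, 1, 2, …` in order of insertion. -/

/-- The three kinds of operations of an lcw expression. -/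
inductive LcwOp (L : Type) where
  | insert : L → LcwOp L
  | join : L → L → LcwOp L
  | relabel : L → L → LcwOp L

/-- The state while executing an lcw expression: the number `n` of vertices
inserted so far (the vertices are `0, …, n-1`), the adjacency relation built
so far, and the current labeling (`none` for indices not yet inserted). -/
structure LcwState (L : Type) where
  n : ℕ
  adj : ℕ → ℕ → Prop
  lab : ℕ → Option L

/-- The initial, empty state. -/
def LcwState.init (L : Type) : LcwState L :=
  ⟨0, fun _ _ => False, fun _ => none⟩

/-- Executing one operation. -/
def LcwState.step {L : Type} [DecidableEq L] (s : LcwState L) : LcwOp L → LcwState L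
  | .insert a => ⟨s.n + 1, s.adj, fun v => if v = s.n then some a else s.lab v⟩
  | .join i j =>
      ⟨s.n,
       fun u v => s.adj u v ∨
         (u ≠ v ∧ ((s.lab u = some i ∧ s.lab v = some j) ∨
                   (s.lab u = some j ∧ s.lab v = some i))),
       s.lab⟩
  | .relabel i j => ⟨s.n, s.adj, fun v => if s.lab v = some i then some j else s.lab v⟩

/-- Executing an lcw expression (a list of operations) from the empty state. -/
def runLcw {L : Type} [DecidableEq L] (e : List (LcwOp L)) : LcwState L :=
  e.foldl LcwState.step (LcwState.init L)

/-- Well-formedness: every edge-adding operation uses two distinct labels. -/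
def WfExpr {L : Type} (e : List (LcwOp L)) : Prop :=
  ∀ op ∈ e, ∀ i j : L, op = LcwOp.join i j → i ≠ j

/-- The expression `e` builds the graph `G`, where the bijection
`f` sends each vertex of `G` to its insertion index (so `f` records the
insertion order of the vertices). -/
def BuildsVia {L V : Type} [DecidableEq L] [Fintype V] (e : List (LcwOp L))
    (G : SimpleGraph V) (f : V → ℕ) : Prop :=
  WfExpr e ∧ Function.Injective f ∧ (runLcw e).n = Fintype.card V ∧
    (∀ v, f v < (runLcw e).n) ∧ ∀ u v, G.Adj u v ↔ (runLcw e).adj (f u) (f v)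

/-- The expression `e` builds the graph `G`. -/
def Builds {L V : Type} [DecidableEq L] [Fintype V] (e : List (LcwOp L))
    (G : SimpleGraph V) : Prop :=
  ∃ f : V → ℕ, BuildsVia e G f

/-- The linear clique-width of a finite graph: the least size of a label
alphabet over which some lcw expression builds `G`.  (An expression over
`Fin k` is an expression using `k` labels; an *efficient* expression for `G`
is one over `Fin (lcw G)`.) -/
noncomputable def lcw {V : Type} [Fintype V] (G : SimpleGraph V) : ℕ :=
  sInf {k : ℕ | ∃ e : List (LcwOp (Fin k)), Builds e G}

/-- `ℓ` is a sink label of the expression `e`: it is never used in an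
edge-adding operation and vertices labeled `ℓ` are never relabeled. -/
def SinkLabel {L : Type} (e : List (LcwOp L)) (ℓ : L) : Prop :=
  (∀ op ∈ e, ∀ i j : L, op = LcwOp.join i j → i ≠ ℓ ∧ j ≠ ℓ) ∧
  (∀ op ∈ e, ∀ j : L, op = LcwOp.relabel ℓ j → j = ℓ)

/-- An expression is sink-free if no label is a sink label. -/
def SinkFree {L : Type} (e : List (LcwOp L)) : Prop :=
  ∀ ℓ : L, ¬ SinkLabel e ℓ

/-- The disjoint union of two graphs. -/
def GraphDisjUnion {V W : Type} (G : SimpleGraph V) (H : SimpleGraph W) :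
    SimpleGraph (V ⊕ W) where
  Adj x y :=
    match x, y with
    | Sum.inl a, Sum.inl b => G.Adj a b
    | Sum.inr a, Sum.inr b => H.Adj a b
    | _, _ => False
  symm := by
    constructor
    rintro (a | a) (b | b) h
    · exact G.adj_symm h
    · exact h.elim
    · exact h.elim
    · exact H.adj_symm h
  loopless := by
    constructor
    rintro (a | a) h
    · exact G.loopless.irrefl a h
    · exact H.loopless.irrefl a h

/-- The join of two graphs: their disjoint union together with all edges
between the two sides. -/
def GraphJoin {V W : Type} (G : SimpleGraph V) (H : SimpleGraph W) :
    SimpleGraph (V ⊕ W) :=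
  (GraphDisjUnion Gᶜ Hᶜ)ᶜ

/-- `H` is (isomorphic to) an induced subgraph of `G`. -/
def InducedSubgraphOf {W V : Type} (H : SimpleGraph W) (G : SimpleGraph V) : Prop :=
  ∃ f : W ↪ V, ∀ a b : W, H.Adj a b ↔ G.Adj (f a) (f b)

/-- The path `P₄` on four vertices (edges 01, 12, 23). -/
def pathP4 : SimpleGraph (Fin 4) :=
  SimpleGraph.fromRel (fun a b => (b : ℕ) = (a : ℕ) + 1)

/-- The cycle `C₄` on four vertices (edges 01, 12, 23, 30). -/
def cycleC4 : SimpleGraph (Fin 4) :=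
  SimpleGraph.fromRel (fun a b => (b : ℕ) = (a : ℕ) + 1 ∨ ((a : ℕ) = 3 ∧ (b : ℕ) = 0))

/-- The graph `2K₂` (edges 01 and 23). -/
def twoK2 : SimpleGraph (Fin 4) :=
  SimpleGraph.fromRel (fun a b => ((a : ℕ) = 0 ∧ (b : ℕ) = 1) ∨ ((a : ℕ) = 2 ∧ (b : ℕ) = 3))

/-- Cographs: the graphs with no induced `P₄`. -/
def IsCograph {V : Type} (G : SimpleGraph V) : Prop :=
  ¬ InducedSubgraphOf pathP4 G

/-- Quasi-threshold (trivially perfect) graphs: no induced `P₄` and no induced `C₄`. -/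
def IsQuasiThreshold {V : Type} (G : SimpleGraph V) : Prop :=
  ¬ InducedSubgraphOf pathP4 G ∧ ¬ InducedSubgraphOf cycleC4 G

/-- Threshold graphs: no induced `P₄`, `C₄` or `2K₂`. -/
def IsThreshold {V : Type} (G : SimpleGraph V) : Prop :=
  ¬ InducedSubgraphOf pathP4 G ∧ ¬ InducedSubgraphOf cycleC4 G ∧ ¬ InducedSubgraphOf twoK2 G

/-- A finite graph, encoded with vertex set `Fin n`.  A *class* of graphs,
i.e. a set of finite graphs closed under isomorphism, is modelled as a
hereditary set of `FinGraph`s (hereditary sets are automatically closed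
under isomorphism). -/
def FinGraph : Type := Σ n : ℕ, SimpleGraph (Fin n)

/-- The complement of a finite graph. -/
def FinGraph.compl (G : FinGraph) : FinGraph := ⟨G.1, G.2ᶜ⟩

/-- The induced-subgraph order on finite graphs. -/
def IndF (H G : FinGraph) : Prop := InducedSubgraphOf H.2 G.2

/-- A set of finite graphs is hereditary if it is closed downward under the
induced subgraph order (in particular it is closed under isomorphism). -/
def Hereditary (C : Set FinGraph) : Prop :=
  ∀ G ∈ C, ∀ H : FinGraph, IndF H G → H ∈ C

/-- The finite graph `K` is isomorphic to the graph `G`. -/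
def IsoTo {V : Type} (K : FinGraph) (G : SimpleGraph V) : Prop :=
  ∃ e : Fin K.1 ≃ V, ∀ a b, K.2.Adj a b ↔ G.Adj (e a) (e b)

/-- The class `C` contains (a copy of) the graph `G`. -/
def MemUpToIso (C : Set FinGraph) {V : Type} (G : SimpleGraph V) : Prop :=
  ∃ K ∈ C, IsoTo K G

/-- `C` is closed under disjoint unions. -/
def ClosedUnderDisjointUnions (C : Set FinGraph) : Prop :=
  ∀ G ∈ C, ∀ H ∈ C, MemUpToIso C (GraphDisjUnion (Sigma.snd G) (Sigma.snd H))

/-- `C` is closed under joins. -/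
def ClosedUnderJoins (C : Set FinGraph) : Prop :=
  ∀ G ∈ C, ∀ H ∈ C, MemUpToIso C (GraphJoin (Sigma.snd G) (Sigma.snd H))

/-- `C` is atomic: it cannot be written as the union of two proper
hereditary subclasses. -/
def AtomicClass (C : Set FinGraph) : Prop :=
  ¬ ∃ D₁ D₂ : Set FinGraph, Hereditary D₁ ∧ Hereditary D₂ ∧
      D₁ ⊂ C ∧ D₂ ⊂ C ∧ C = D₁ ∪ D₂

/-- The inflation `G[H₁, …, Hₙ]` of a graph `G` on `Fin n` by graphs
`H i` (`i : Fin n`): substitute `H i` for the vertex `i` of `G`. -/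
def inflate {n : ℕ} (G : SimpleGraph (Fin n)) (m : Fin n → ℕ)
    (H : ∀ i : Fin n, SimpleGraph (Fin (m i))) :
    SimpleGraph (Σ i : Fin n, Fin (m i)) where
  Adj x y := (x.1 ≠ y.1 ∧ G.Adj x.1 y.1) ∨ ∃ h : x.1 = y.1, (H y.1).Adj (h ▸ x.2) y.2
  symm := by
    constructor
    rintro ⟨i, a⟩ ⟨j, b⟩ (⟨hne, hadj⟩ | ⟨h, hadj⟩)
    · exact Or.inl ⟨hne.symm, G.adj_symm hadj⟩
    · cases h
      exact Or.inr ⟨rfl, (H i).adj_symm hadj⟩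
  loopless := by
    constructor
    rintro ⟨i, a⟩ (⟨hne, _⟩ | ⟨h, hadj⟩)
    · exact hne rfl
    · exact (H i).loopless.irrefl a hadj

/-- The inflation `C[D]` of the class `C` by the class `D`: all graphs
isomorphic to an inflation of a graph of `C` by graphs of `D`. -/
def classInflate (C D : Set FinGraph) : Set FinGraph :=
  {K | ∃ (n : ℕ) (G : SimpleGraph (Fin n)) (m : Fin n → ℕ)
        (H : ∀ i : Fin n, SimpleGraph (Fin (m i))),
      (⟨n, G⟩ : FinGraph) ∈ C ∧ (∀ i, (⟨m i, H i⟩ : FinGraph) ∈ D) ∧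
      IsoTo K (inflate G m H)}

/-- The class of threshold graphs (as finite graphs). -/
def thresholdClass : Set FinGraph := {G : FinGraph | IsThreshold G.2}

/-- Vertex types of the sequence witnessing unbounded linear clique-width:
`qtV 0` carries `G₁ = K₂` and `qtV (k+1)` carries
`G_{k+2} = K₁ ∗ ((G_{k+1} ∪ G_{k+1}) ∪ (G_{k+1} ∪ G_{k+1}))`. -/
def qtV : ℕ → Type
  | 0 => Fin 2
  | k + 1 => Unit ⊕ ((qtV k ⊕ qtV k) ⊕ (qtV k ⊕ qtV k))

instance qtVFintype : ∀ k : ℕ, Fintype (qtV k)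
  | 0 => inferInstanceAs (Fintype (Fin 2))
  | k + 1 =>
      letI := qtVFintype k
      inferInstanceAs (Fintype (Unit ⊕ ((qtV k ⊕ qtV k) ⊕ (qtV k ⊕ qtV k))))

/-- The graphs `G₁, G₂, …` of the paper, reindexed so that `qtG k = G_{k+1}`:
`qtG 0 = K₂` and `qtG (k+1) = K₁ ∗ ((qtG k ∪ qtG k) ∪ (qtG k ∪ qtG k))`. -/
def qtG : ∀ k : ℕ, SimpleGraph (qtV k)
  | 0 => (⊤ : SimpleGraph (Fin 2))
  | k + 1 =>
      GraphJoin (⊥ : SimpleGraph Unit)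
        (GraphDisjUnion (GraphDisjUnion (qtG k) (qtG k)) (GraphDisjUnion (qtG k) (qtG k)))

/-! In an lcw expression, vertices inserted one after another with the same label are treated
alike by every later operation, and they are never made adjacent, since edges are only added
between two distinct labels. Hence repeating the insertion of the vertex `t` `c t` times builds
the graph in which `t` is replaced by `c t` pairwise nonadjacent copies, occupying the block of
indices `[∑_{s<t} c s, ∑_{s≤t} c s)`. Taking `c = m` builds the inflation by edgeless graphs;
taking `c` with values in `{0, 1}` builds any induced subgraph, and `G` is an induced subgraph
of its inflation when every `m i` is positive. -/

def blockStart (c : ℕ → ℕ) (t : ℕ) : ℕ := ∑ s ∈ Finset.range t, c s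

def InBlock (c : ℕ → ℕ) (t x : ℕ) : Prop :=
  blockStart c t ≤ x ∧ x < blockStart c (t + 1)

lemma blockStart_succ (c : ℕ → ℕ) (t : ℕ) : blockStart c (t + 1) = blockStart c t + c t :=
  Finset.sum_range_succ c t

lemma blockStart_mono (c : ℕ → ℕ) : Monotone (blockStart c) :=
  fun _ _ h => Finset.sum_le_sum_of_subset (Finset.range_subset_range.2 h)

lemma inBlock_blockStart_add {c : ℕ → ℕ} {t r : ℕ} (hr : r < c t) :
    InBlock c t (blockStart c t + r) := by
  rw [InBlock, blockStart_succ]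
  omega

lemma InBlock.lt_blockStart {c : ℕ → ℕ} {t x N : ℕ} (h : InBlock c t x) (ht : t < N) :
    x < blockStart c N :=
  h.2.trans_le (blockStart_mono c ht)

lemma InBlock.unique {c : ℕ → ℕ} {t t' x : ℕ} (h : InBlock c t x) (h' : InBlock c t' x) :
    t = t' := by
  by_contra hne
  rcases Nat.lt_or_gt_of_ne hne with hlt | hlt
  · exact absurd (h.lt_blockStart hlt) (not_lt.2 h'.1)
  · exact absurd (h'.lt_blockStart hlt) (not_lt.2 h.1)

lemma exists_inBlock_of_lt_blockStart (c : ℕ → ℕ) {x : ℕ} :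
    ∀ {N : ℕ}, x < blockStart c N → ∃ t, InBlock c t x
  | 0, hx => absurd hx (Nat.not_lt_zero x)
  | N + 1, hx => by
    by_cases h : x < blockStart c N
    · exact exists_inBlock_of_lt_blockStart c h
    · exact ⟨N, not_lt.1 h, hx⟩

/-- `e` with the insertion of its vertex of index `r` repeated `c (k + r)` times. -/
def repeatInserts {L : Type} (c : ℕ → ℕ) : ℕ → List (LcwOp L) → List (LcwOp L)
  | _, [] => []
  | k, .insert a :: e => List.replicate (c k) (.insert a) ++ repeatInserts c (k + 1) e
  | k, .join i j :: e => .join i j :: repeatInserts c k e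
  | k, .relabel i j :: e => .relabel i j :: repeatInserts c k e

lemma WfExpr.repeatInserts {L : Type} {e : List (LcwOp L)} (he : WfExpr e) (c : ℕ → ℕ)
    (k : ℕ) : WfExpr (repeatInserts c k e) := by
  induction e generalizing k with
  | nil => exact fun _ h => absurd h List.not_mem_nil
  | cons op e ih =>
    rw [WfExpr, List.forall_mem_cons] at he
    have ih := ih he.2
    cases op with
    | insert a =>
      rintro o ho i j rfl
      rcases List.mem_append.1 ho with ho | ho
      · cases List.eq_of_mem_replicate ho
      · exact ih (k + 1) _ ho i j rfl
    | join i j => exact List.forall_mem_cons.2 ⟨he.1, ih k⟩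
    | relabel i j => exact List.forall_mem_cons.2 ⟨by simp, ih k⟩

namespace LcwState

variable {L : Type}

def LabeledBelow (s : LcwState L) : Prop := ∀ x, s.n ≤ x → s.lab x = none

lemma labeledBelow_init : (init L).LabeledBelow := fun _ _ => rfl

/-- `s'` is `s` with vertex `t` replaced by the independent copies `x` with `InBlock c t x`. -/
structure Simulates (c : ℕ → ℕ) (s s' : LcwState L) : Prop where
  n_eq : s'.n = blockStart c s.n
  lab_eq : ∀ t x, InBlock c t x → s'.lab x = s.lab t
  adj_iff : ∀ x y, s'.adj x y ↔ ∃ t t', InBlock c t x ∧ InBlock c t' y ∧ s.adj t t'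

lemma Simulates.init (c : ℕ → ℕ) : Simulates c (init L) (init L) where
  n_eq := rfl
  lab_eq _ _ _ := rfl
  adj_iff _ _ := by simp [LcwState.init]

variable [DecidableEq L]

lemma LabeledBelow.step {s : LcwState L} (hs : s.LabeledBelow) (op : LcwOp L) :
    (s.step op).LabeledBelow := by
  intro x hx
  cases op with
  | insert a =>
    simp only [LcwState.step] at hx ⊢
    rw [if_neg (by omega), hs x (by omega)]
  | join i j => exact hs x hx
  | relabel i j =>
    simp only [LcwState.step] at hx ⊢
    simp [hs x hx]

lemma LabeledBelow.foldl {s : LcwState L} (hs : s.LabeledBelow) (e : List (LcwOp L)) :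
    (e.foldl LcwState.step s).LabeledBelow := by
  induction e generalizing s with
  | nil => exact hs
  | cons op e ih => exact ih (hs.step op)

lemma foldl_replicate_insert (s : LcwState L) (a : L) (k : ℕ) :
    (List.replicate k (LcwOp.insert a)).foldl step s =
      ⟨s.n + k, s.adj, fun x => if s.n ≤ x ∧ x < s.n + k then some a else s.lab x⟩ := by
  induction k generalizing s with
  | zero =>
    cases s
    simp only [List.replicate_zero, List.foldl_nil, add_zero, LcwState.mk.injEq, true_and]
    exact funext fun x => (if_neg (by omega)).symm
  | succ k ih =>
    rw [List.replicate_succ, List.foldl_cons, ih]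
    simp only [LcwState.step, LcwState.mk.injEq, true_and]
    refine ⟨by omega, funext fun x => ?_⟩
    by_cases hx : x = s.n
    · simp [hx]
    · rw [if_neg hx]
      exact if_congr (by omega) rfl rfl

namespace Simulates

variable {c : ℕ → ℕ} {s s' : LcwState L}

lemma insert (h : Simulates c s s') (a : L) :
    Simulates c (s.step (.insert a)) ((List.replicate (c s.n) (.insert a)).foldl step s') := by
  rw [foldl_replicate_insert]
  refine ⟨by simp [LcwState.step, h.n_eq, blockStart_succ], fun t x hx => ?_, h.adj_iff⟩
  simp only [LcwState.step, h.n_eq]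
  by_cases ht : t = s.n
  · subst ht
    rw [if_pos (by simpa [InBlock, blockStart_succ] using hx), if_pos rfl]
  · have hx' : ¬ InBlock c s.n x := fun hx' => ht (hx.unique hx')
    rw [if_neg (by simpa [InBlock, blockStart_succ] using hx'), if_neg ht, h.lab_eq t x hx]

lemma relabel (h : Simulates c s s') (i j : L) :
    Simulates c (s.step (.relabel i j)) (s'.step (.relabel i j)) :=
  ⟨h.n_eq, fun t x hx => by simp [LcwState.step, h.lab_eq t x hx], h.adj_iff⟩

lemma join (h : Simulates c s s') (hs' : s'.LabeledBelow) {i j : L} (hij : i ≠ j) :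
    Simulates c (s.step (.join i j)) (s'.step (.join i j)) := by
  refine ⟨h.n_eq, h.lab_eq, fun x y => ?_⟩
  have mem_block : ∀ x b, s'.lab x = some b → ∃ t, InBlock c t x ∧ s.lab t = some b := by
    intro x b hb
    have hx : x < blockStart c s.n := by
      by_contra hx
      rw [hs' x (h.n_eq ▸ not_lt.1 hx)] at hb
      cases hb
    obtain ⟨t, ht⟩ := exists_inBlock_of_lt_blockStart c hx
    exact ⟨t, ht, h.lab_eq t x ht ▸ hb⟩
  simp only [LcwState.step, h.adj_iff]
  constructor
  · rintro (⟨t, t', hx, hy, hadj⟩ | ⟨-, ⟨hxi, hyj⟩ | ⟨hxj, hyi⟩⟩)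
    · exact ⟨t, t', hx, hy, Or.inl hadj⟩
    · obtain ⟨t, hx, hti⟩ := mem_block x i hxi
      obtain ⟨t', hy, htj⟩ := mem_block y j hyj
      refine ⟨t, t', hx, hy, Or.inr ⟨fun htt => hij ?_, Or.inl ⟨hti, htj⟩⟩⟩
      rw [htt, htj] at hti
      exact (Option.some_injective _ hti).symm
    · obtain ⟨t, hx, htj⟩ := mem_block x j hxj
      obtain ⟨t', hy, hti⟩ := mem_block y i hyi
      refine ⟨t, t', hx, hy, Or.inr ⟨fun htt => hij ?_, Or.inr ⟨htj, hti⟩⟩⟩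
      rw [htt, hti] at htj
      exact Option.some_injective _ htj
  · rintro ⟨t, t', hx, hy, hadj | ⟨htt, hlab⟩⟩
    · exact Or.inl ⟨t, t', hx, hy, hadj⟩
    · refine Or.inr ⟨fun hxy => htt (hx.unique (hxy ▸ hy)), ?_⟩
      rwa [h.lab_eq t x hx, h.lab_eq t' y hy]

lemma foldl (h : Simulates c s s') (hs' : s'.LabeledBelow) {e : List (LcwOp L)}
    (he : WfExpr e) :
    Simulates c (e.foldl step s) ((repeatInserts c s.n e).foldl step s') := by
  induction e generalizing s s' with
  | nil => exact h
  | cons op e ih =>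
    rw [WfExpr, List.forall_mem_cons] at he
    cases op with
    | insert a =>
      rw [repeatInserts, List.foldl_append]
      exact ih (h.insert a) (hs'.foldl _) he.2
    | join i j => exact ih (h.join hs' (he.1 i j rfl)) (hs'.step _) he.2
    | relabel i j => exact ih (h.relabel i j) (hs'.step _) he.2

end Simulates

lemma simulates_runLcw (c : ℕ → ℕ) {e : List (LcwOp L)} (he : WfExpr e) :
    Simulates c (runLcw e) (runLcw (repeatInserts c 0 e)) :=
  (Simulates.init c).foldl labeledBelow_init he

end LcwState

def fiberWeight {V : Type} [Fintype V] (f : V → ℕ) (μ : V → ℕ) (t : ℕ) : ℕ :=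
  ∑ v ∈ Finset.univ.filter (f · = t), μ v

lemma fiberWeight_apply {V : Type} [Fintype V] {f : V → ℕ} (hf : Function.Injective f)
    (μ : V → ℕ) (v : V) : fiberWeight f μ (f v) = μ v := by
  rw [fiberWeight, Finset.sum_eq_single_of_mem v (by simp)]
  intro w hw hwv
  exact absurd (hf (Finset.mem_filter.1 hw).2) hwv

lemma blockStart_fiberWeight {V : Type} [Fintype V] {f : V → ℕ} {N : ℕ} (hf : ∀ v, f v < N)
    (μ : V → ℕ) : blockStart (fiberWeight f μ) N = ∑ v, μ v :=
  Finset.sum_fiberwise_of_maps_to (fun v _ => Finset.mem_range.2 (hf v)) μ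

/-- `K` is `G` with every vertex `v` replaced by `μ v` pairwise nonadjacent copies, the copy
`w` of `p w` being numbered `r w`. -/
lemma BuildsVia.builds_blowUp {L V W : Type} [DecidableEq L] [Fintype V] [Fintype W]
    {e : List (LcwOp L)} {G : SimpleGraph V} {f : V → ℕ} (he : BuildsVia e G f)
    {K : SimpleGraph W} (μ : V → ℕ) (p : W → V) (r : W → ℕ) (hr : ∀ w, r w < μ (p w))
    (hpr : Function.Injective fun w => (p w, r w)) (hcard : Fintype.card W = ∑ v, μ v)
    (hK : ∀ w w', K.Adj w w' ↔ G.Adj (p w) (p w')) :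
    Builds (repeatInserts (fiberWeight f μ) 0 e) K := by
  obtain ⟨hwf, hf, hn, hlt, hadj⟩ := he
  set c := fiberWeight f μ
  have hsim := LcwState.simulates_runLcw c hwf
  have hblock : ∀ w, InBlock c (f (p w)) (blockStart c (f (p w)) + r w) := fun w =>
    inBlock_blockStart_add ((hr w).trans_eq (fiberWeight_apply hf μ (p w)).symm)
  refine ⟨fun w => blockStart c (f (p w)) + r w, hwf.repeatInserts c 0, ?_, ?_, ?_, ?_⟩
  · intro w w' (hww : blockStart c (f (p w)) + r w = blockStart c (f (p w')) + r w')
    have hp : p w = p w' := hf ((hblock w).unique (hww ▸ hblock w'))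
    rw [hp] at hww
    exact hpr (Prod.ext hp (Nat.add_left_cancel hww))
  · rw [hsim.n_eq, hn, blockStart_fiberWeight (fun v => hn ▸ hlt v), hcard]
  · exact fun w => hsim.n_eq ▸ (hblock w).lt_blockStart (hlt (p w))
  · intro w w'
    rw [hK, hadj, hsim.adj_iff]
    constructor
    · exact fun h => ⟨_, _, hblock w, hblock w', h⟩
    · rintro ⟨t, t', ht, ht', h⟩
      rwa [ht.unique (hblock w), ht'.unique (hblock w')] at h

lemma Builds.of_inducedSubgraphOf {L V W : Type} [DecidableEq L] [Fintype V] [Fintype W]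
    {e : List (LcwOp L)} {G : SimpleGraph V} {K : SimpleGraph W} (he : Builds e G)
    (hK : InducedSubgraphOf K G) : ∃ e' : List (LcwOp L), Builds e' K := by
  classical
  obtain ⟨f, hf⟩ := he
  obtain ⟨g, hg⟩ := hK
  refine ⟨_, hf.builds_blowUp (fun v => if v ∈ Set.range g then 1 else 0) g 0
    (fun w => by simp) (fun w w' h => g.injective (congrArg Prod.fst h)) ?_ hg⟩
  rw [Finset.sum_boole, Nat.cast_id, ← Finset.card_univ, ← Finset.card_map g]
  congr 1
  ext v
  simp [eq_comm]

lemma inflate_bot_adj {n : ℕ} (G : SimpleGraph (Fin n)) (m : Fin n → ℕ)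
    (x y : Σ i : Fin n, Fin (m i)) : (inflate G m fun _ => ⊥).Adj x y ↔ G.Adj x.1 y.1 := by
  simp only [inflate, SimpleGraph.bot_adj, exists_const_iff, and_false, or_false,
    and_iff_right_iff_imp]
  exact G.ne_of_adj

lemma Builds.inflate_bot {L : Type} [DecidableEq L] {n : ℕ} {e : List (LcwOp L)}
    {G : SimpleGraph (Fin n)} (he : Builds e G) (m : Fin n → ℕ) :
    ∃ e' : List (LcwOp L), Builds e' (inflate G m fun _ => ⊥) := by
  obtain ⟨f, hf⟩ := he
  refine ⟨_, hf.builds_blowUp m Sigma.fst (fun x => x.2) (fun x => x.2.isLt) ?_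
    (by simp [Fintype.card_sigma]) (inflate_bot_adj G m)⟩
  rintro ⟨i, a⟩ ⟨j, b⟩ h
  simp only [Prod.mk.injEq] at h
  obtain ⟨rfl, hab⟩ := h
  rw [Fin.ext hab]

lemma inducedSubgraphOf_inflate {n : ℕ} (G : SimpleGraph (Fin n)) {m : Fin n → ℕ}
    (hm : ∀ i, 0 < m i) (H : ∀ i : Fin n, SimpleGraph (Fin (m i))) :
    InducedSubgraphOf G (inflate G m H) := by
  refine ⟨⟨fun i => ⟨i, ⟨0, hm i⟩⟩, fun _ _ h => congrArg Sigma.fst h⟩, fun i j => ?_⟩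
  simp only [inflate]
  constructor
  · exact fun h => Or.inl ⟨G.ne_of_adj h, h⟩
  · rintro (⟨-, h⟩ | ⟨hij, h⟩)
    · exact h
    · obtain rfl : i = j := hij
      exact ((H i).loopless.irrefl _ h).elim

lemma lcw_eq_of_builds_iff {V W : Type} [Fintype V] [Fintype W] {A : SimpleGraph V}
    {B : SimpleGraph W} (h : ∀ k, (∃ e : List (LcwOp (Fin k)), Builds e A) ↔
      ∃ e : List (LcwOp (Fin k)), Builds e B) :
    lcw A = lcw B := by
  simp only [lcw, h]

/-- inflating a graph `G` by nonempty edgeless graphs does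
not change the linear clique-width. -/
theorem statement_12 (n : ℕ) (G : SimpleGraph (Fin n)) (m : Fin n → ℕ)
    (H : ∀ i : Fin n, SimpleGraph (Fin (m i)))
    (hedgeless : ∀ i, H i = ⊥) (hnonempty : ∀ i, 0 < m i) :
    lcw (inflate G m H) = lcw G := by
  obtain rfl : H = fun _ => ⊥ := funext hedgeless
  refine lcw_eq_of_builds_iff fun k => ⟨?_, ?_⟩
  · rintro ⟨e, he⟩
    exact he.of_inducedSubgraphOf (inducedSubgraphOf_inflate G hnonempty _)
  · rintro ⟨e, he⟩
    exact he.inflate_bot m
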